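/- arXiv:2011.03439 — 2 statements merged into one kernel-verified Lean document; each statement's English description precedes it below -/
import Mathlib

section
/- Every natural number m > 0 has an Ackermann normal form: there exist k, a strictly decreasing sequence b_{k-1} < ... < b_0 of natural numbers, and natural numbers n_0, ..., n_{k-1} such that m = F_{b_{k-1}}^{1+n_{k-1}} ∘ ... ∘ F_{b_0}^{1+n_0}(1) and for each i < k, n_i < F_{b_{i-1}}^{1+n_{i-1}} ∘ ... ∘ F_{b_0}^{1+n_0}(1). -/
/-- The fast-growing hierarchy: `F 0 n = n + 1` and `F (b+1) n = (F b)^[1+n] n`. -/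
def F : ℕ → ℕ → ℕ
  | 0, n => n + 1
  | b + 1, n => (F b)^[1 + n] n

/-- `evalANF [(b₀,n₀),…,(b_{k-1},n_{k-1})] = F_{b_{k-1}}^[1+n_{k-1}] ∘ ⋯ ∘ F_{b₀}^[1+n₀] (1)`:
the list records the innermost pair first. -/
def evalANF (l : List (ℕ × ℕ)) : ℕ :=
  l.foldl (fun m p => (F p.1)^[1 + p.2] m) 1

/-- `l` is an Ackermann normal form: the indices `b_{k-1} < ⋯ < b₀` are strictly decreasing
along the list (which starts with the innermost pair `(b₀,n₀)`), and each exponent `n_i`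
is smaller than the value of the composition of the earlier (inner) pairs applied to `1`. -/
def IsANF (l : List (ℕ × ℕ)) : Prop :=
  l.Chain' (fun p q => q.1 < p.1) ∧
  ∀ i (h : i < l.length), (l.get ⟨i, h⟩).2 < evalANF (l.take i)

/-!
Greedy construction, outermost level first. If `v ≤ m < F (b+1) v = (F b)^[1+v] v`, then
`m` lies between two consecutive iterates `(F b)^[j] v ≤ m < (F b)^[j+1] v` with `j ≤ v`;
for `j = j' + 1` we record the pair `(b, j')` (admissible since `j' < v`), and in either case
recurse one level lower with `m < F b (current value)`. At level `0` the interval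
`[v, v + 1)` forces `m = v`. Starting from the empty form (value `1`) at level `m` works
because `m < F m 1`.
-/

lemma self_lt_F (b n : ℕ) : n < F b n := by
  induction b generalizing n with
  | zero => exact Nat.lt_succ_self n
  | succ b ih =>
    calc n ≤ (F b)^[n] n := Function.id_le_iterate_of_id_le (fun k => (ih k).le) n n
      _ < F b ((F b)^[n] n) := ih _
      _ = (F b)^[n + 1] n := (Function.iterate_succ_apply' _ _ _).symm
      _ = F (b + 1) n := by rw [Nat.add_comm n 1]; rfl

lemma self_lt_F_one (b : ℕ) : b < F b 1 := by
  induction b with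
  | zero => decide
  | succ b ih =>
    have h : F (b + 1) 1 = F b (F b 1) := rfl
    have := self_lt_F b (F b 1)
    omega

lemma exists_iterate_le_lt_iterate_succ {α : Type*} [LinearOrder α] (f : α → α) {v m : α}
    (hv : v ≤ m) {k : ℕ} (hk : m < f^[k] v) :
    ∃ j < k, f^[j] v ≤ m ∧ m < f^[j + 1] v := by
  induction k with
  | zero => exact absurd hv (not_le.mpr hk)
  | succ k ih =>
    by_cases h : m < f^[k] v
    · obtain ⟨j, hjk, hj⟩ := ih h
      exact ⟨j, by omega, hj⟩
    · exact ⟨k, k.lt_succ_self, not_lt.mp h, hk⟩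

lemma evalANF_append_singleton (l : List (ℕ × ℕ)) (p : ℕ × ℕ) :
    evalANF (l ++ [p]) = (F p.1)^[1 + p.2] (evalANF l) := by
  simp [evalANF, List.foldl_append]

lemma isANF_nil : IsANF [] :=
  ⟨List.isChain_nil, fun _ h => absurd h (Nat.not_lt_zero _)⟩

lemma IsANF.append_singleton {l : List (ℕ × ℕ)} (hl : IsANF l) {b n : ℕ}
    (hb : ∀ p ∈ l, b < p.1) (hn : n < evalANF l) : IsANF (l ++ [(b, n)]) := by
  refine ⟨List.isChain_append.mpr ⟨hl.1, List.isChain_singleton _, ?_⟩, fun i hi => ?_⟩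
  · rintro p hp q ⟨⟩
    exact hb p (List.mem_of_mem_getLast? hp)
  · rw [List.length_append, List.length_singleton] at hi
    rcases Nat.lt_or_ge i l.length with hil | hil
    · have htake : (l ++ [(b, n)]).take i = l.take i := by
        simp [List.take_append, Nat.sub_eq_zero_of_le hil.le]
      simpa [List.getElem_append_left hil, htake] using hl.2 i hil
    · obtain rfl : i = l.length := by omega
      simpa [List.take_left] using hn

lemma exists_isANF_of_le_of_lt_F (b : ℕ) {l : List (ℕ × ℕ)} (hl : IsANF l)
    (hb : ∀ p ∈ l, b ≤ p.1) {m : ℕ} (hle : evalANF l ≤ m) (hlt : m < F b (evalANF l)) :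
    ∃ l', IsANF l' ∧ evalANF l' = m := by
  induction b generalizing l with
  | zero => exact ⟨l, hl, by simp only [F] at hlt; omega⟩
  | succ b ih =>
    have hb' : ∀ p ∈ l, b < p.1 := hb
    obtain ⟨j, hjv, hjle, hjlt⟩ := exists_iterate_le_lt_iterate_succ (F b) (k := 1 + evalANF l) hle hlt
    rw [Function.iterate_succ_apply'] at hjlt
    cases j with
    | zero => exact ih hl (fun p hp => (hb' p hp).le) hjle hjlt
    | succ j =>
      have hval : evalANF (l ++ [(b, j)]) = (F b)^[j + 1] (evalANF l) := by
        rw [evalANF_append_singleton, Nat.add_comm]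
      refine ih (hl.append_singleton hb' (by omega)) ?_ (hval ▸ hjle) (hval ▸ hjlt)
      simp only [List.mem_append, List.mem_singleton]
      rintro p (hp | rfl)
      exacts [(hb' p hp).le, le_rfl]

theorem exists_ackermannNormalForm (m : ℕ) (hm : 0 < m) :
    ∃ l : List (ℕ × ℕ), IsANF l ∧ evalANF l = m :=
  exists_isANF_of_le_of_lt_F m isANF_nil (by simp) hm (self_lt_F_one m)
end

section
/- For strictly increasing f : {0,…,b−1} → {0,…,b'−1}, the map A(f) defined on Ackermann normal forms by A(f)(F_{b_{k-1}}^{1+n_{k-1}} ∘ ⋯ ∘ F_{b_0}^{1+n_0}(1)) = F_{f(b_{k-1})}^{1+A(f)(n_{k-1})} ∘ ⋯ ∘ F_{f(b_0)}^{1+A(f)(n_0)}(1), with A(f)(0) = 0, is strictly increasing on {0,…,F_b(1)−1}, takes values in {0,…,F_{b'}(1)−1}, and preserves Ackermann normal forms. -/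
lemma lt_F (c n : ℕ) : n < F c n := by
  induction c generalizing n with
  | zero => exact n.lt_succ_self
  | succ c ih =>
    calc n < F c n := ih n
      _ ≤ (F c)^[n] (F c n) := Function.id_le_iterate_of_id_le (fun x => (ih x).le) n _
      _ = F (c + 1) n := by rw [F, add_comm, Function.iterate_succ_apply]

lemma F_succ_apply (c n : ℕ) : F (c + 1) n = (F c)^[1 + n] n := rfl

lemma F_strictMono (c : ℕ) : StrictMono (F c) := by
  induction c with
  | zero => exact fun m n h => Nat.succ_lt_succ h
  | succ c ih =>
    intro m n h
    calc (F c)^[1 + m] m < (F c)^[1 + m] n := ih.iterate _ h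
      _ ≤ (F c)^[1 + n] n :=
        (ih.strictMono_iterate_of_lt_map (lt_F c n)).monotone (by omega)

lemma strictMono_iterate_F (c x : ℕ) : StrictMono fun k => (F c)^[k] x :=
  (F_strictMono c).strictMono_iterate_of_lt_map (lt_F c x)

lemma lt_iterate_F_one_add (c x n : ℕ) : x < (F c)^[1 + n] x :=
  strictMono_iterate_F c x (by omega : 0 < 1 + n)

lemma iterate_F_one_add_lt_F_succ {c x n : ℕ} (h : n < x) : (F c)^[1 + n] x < F (c + 1) x :=
  strictMono_iterate_F c x (by omega)

lemma add_two_le_F_one (c : ℕ) : c + 2 ≤ F c 1 := by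
  induction c with
  | zero => rfl
  | succ c ih =>
    have : F c 1 < F c (F c 1) := lt_F c _
    rw [F_succ_apply, Function.iterate_succ_apply', Function.iterate_one]
    omega

def fOrbit (c : ℕ) : Set ℕ := Set.range fun k => (F c)^[k] 1

lemma one_mem_fOrbit (c : ℕ) : 1 ∈ fOrbit c := ⟨0, rfl⟩

lemma one_le_of_mem_fOrbit {c x : ℕ} (hx : x ∈ fOrbit c) : 1 ≤ x := by
  obtain ⟨k, rfl⟩ := hx
  exact (strictMono_iterate_F c 1).monotone k.zero_le

lemma iterate_F_mem_fOrbit {c x : ℕ} (hx : x ∈ fOrbit c) (k : ℕ) :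
    (F c)^[k] x ∈ fOrbit c := by
  obtain ⟨j, rfl⟩ := hx
  exact ⟨k + j, Function.iterate_add_apply _ _ _ _⟩

lemma F_mem_fOrbit {c x : ℕ} (hx : x ∈ fOrbit c) : F c x ∈ fOrbit c :=
  iterate_F_mem_fOrbit hx 1

lemma mem_fOrbit_zero {x : ℕ} (hx : 1 ≤ x) : x ∈ fOrbit 0 := by
  have : ∀ k, (F 0)^[k] 1 = k + 1 := fun k => by
    induction k with
    | zero => rfl
    | succ k ih => rw [Function.iterate_succ_apply', ih]; rfl
  exact ⟨x - 1, by simp only [this]; omega⟩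

lemma fOrbit_succ_subset (c : ℕ) : fOrbit (c + 1) ⊆ fOrbit c := by
  rintro _ ⟨k, rfl⟩
  induction k with
  | zero => exact one_mem_fOrbit c
  | succ k ih =>
    simp only [Function.iterate_succ_apply'] at ih ⊢
    exact iterate_F_mem_fOrbit ih _

lemma fOrbit_antitone : Antitone fOrbit :=
  antitone_nat_of_succ_le fOrbit_succ_subset

lemma F_one_mem_fOrbit {c b : ℕ} (h : c ≤ b) : F b 1 ∈ fOrbit c :=
  fOrbit_antitone h (F_mem_fOrbit (one_mem_fOrbit b))

lemma F_le_of_mem_fOrbit {c x y : ℕ} (hx : x ∈ fOrbit c) (hy : y ∈ fOrbit c) (h : x < y) :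
    F c x ≤ y := by
  obtain ⟨i, rfl⟩ := hx
  obtain ⟨j, rfl⟩ := hy
  rw [← Function.iterate_succ_apply' (F c)]
  exact (strictMono_iterate_F c 1).monotone ((strictMono_iterate_F c 1).lt_iff_lt.mp h)

lemma eq_of_mem_fOrbit_of_le_of_lt_F {c x y m : ℕ} (hx : x ∈ fOrbit c) (hy : y ∈ fOrbit c)
    (hxm : x ≤ m) (hmx : m < F c x) (hym : y ≤ m) (hmy : m < F c y) : x = y := by
  by_contra hne
  rcases Nat.lt_or_gt_of_ne hne with h | h
  · exact absurd (F_le_of_mem_fOrbit hx hy h) (by omega)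
  · exact absurd (F_le_of_mem_fOrbit hy hx h) (by omega)

lemma exists_iterate_F_eq {c x y : ℕ} (hx : x ∈ fOrbit c) (hy : y ∈ fOrbit c) (h : x ≤ y) :
    ∃ j, (F c)^[j] x = y := by
  obtain ⟨i, rfl⟩ := hx
  obtain ⟨j, rfl⟩ := hy
  have hij : i ≤ j := (strictMono_iterate_F c 1).le_iff_le.mp h
  exact ⟨j - i, by rw [← Function.iterate_add_apply, Nat.sub_add_cancel hij]⟩

lemma exists_mem_fOrbit_le_lt_F (c : ℕ) {m : ℕ} (hm : 1 ≤ m) :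
    ∃ v ∈ fOrbit c, v ≤ m ∧ m < F c v := by
  have hex : ∃ k, m < (F c)^[k] 1 :=
    ⟨m + 1, (strictMono_iterate_F c 1).le_apply⟩
  have hk : Nat.find hex ≠ 0 := fun h0 => by
    have := Nat.find_spec hex
    rw [h0, Function.iterate_zero_apply] at this
    omega
  refine ⟨(F c)^[Nat.find hex - 1] 1, ⟨_, rfl⟩, not_lt.mp (Nat.find_min hex (by omega)), ?_⟩
  rw [← Function.iterate_succ_apply' (F c), Nat.succ_eq_add_one, Nat.sub_add_cancel (by omega)]
  exact Nat.find_spec hex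

/-- `m = F_d^{1+n}(v)` is the outermost layer of the Ackermann normal form of `m`, and `v` is the
value of its inner layers. -/
structure IsOuterLayer (m d v n : ℕ) : Prop where
  mem : v ∈ fOrbit (d + 1)
  lt : n < v
  eq : (F d)^[1 + n] v = m

namespace IsOuterLayer

variable {m d v n : ℕ}

lemma lt_self (h : IsOuterLayer m d v n) : v < m :=
  h.eq ▸ lt_iterate_F_one_add d v n

lemma lt_F (h : IsOuterLayer m d v n) : m < F (d + 1) v :=
  h.eq ▸ iterate_F_one_add_lt_F_succ h.lt

lemma two_le (h : IsOuterLayer m d v n) : 2 ≤ m := by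
  have := one_le_of_mem_fOrbit h.mem
  have := h.lt_self
  omega

lemma mem_fOrbit (h : IsOuterLayer m d v n) : m ∈ fOrbit d :=
  h.eq ▸ iterate_F_mem_fOrbit (fOrbit_succ_subset d h.mem) _

lemma not_mem_fOrbit_succ (h : IsOuterLayer m d v n) : m ∉ fOrbit (d + 1) :=
  fun hm => (F_le_of_mem_fOrbit h.mem hm h.lt_self).not_gt h.lt_F

lemma le_of_mem_fOrbit {c : ℕ} (h : IsOuterLayer m d v n) (hm : m ∈ fOrbit c) : c ≤ d :=
  not_lt.mp fun hdc => h.not_mem_fOrbit_succ (fOrbit_antitone hdc hm)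

lemma lt_of_lt_F_one {b : ℕ} (h : IsOuterLayer m d v n) (hm : m < F b 1) : d < b := by
  by_contra! hbd
  have := F_le_of_mem_fOrbit (one_mem_fOrbit b) (fOrbit_antitone hbd h.mem_fOrbit)
    (by have := h.two_le; omega)
  omega

lemma unique {d' v' n' : ℕ} (h : IsOuterLayer m d v n) (h' : IsOuterLayer m d' v' n') :
    d = d' ∧ v = v' ∧ n = n' := by
  obtain rfl : d = d' := le_antisymm (h'.le_of_mem_fOrbit h.mem_fOrbit)
    (h.le_of_mem_fOrbit h'.mem_fOrbit)
  obtain rfl : v = v' := eq_of_mem_fOrbit_of_le_of_lt_F h.mem h'.mem h.lt_self.le h.lt_F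
    h'.lt_self.le h'.lt_F
  have := (strictMono_iterate_F d v).injective (h.eq.trans h'.eq.symm)
  exact ⟨rfl, rfl, by omega⟩

end IsOuterLayer

lemma exists_isOuterLayer {m : ℕ} (hm : 2 ≤ m) :
    ∃ d v n, IsOuterLayer m d v n := by
  classical
  have hex : ∃ c, m ∉ fOrbit c := ⟨m, fun h => by
    have := F_le_of_mem_fOrbit (one_mem_fOrbit m) h (by omega)
    have := add_two_le_F_one m
    omega⟩
  have hd : Nat.find hex ≠ 0 := fun h0 => Nat.find_spec hex (h0 ▸ mem_fOrbit_zero (by omega))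
  set d := Nat.find hex - 1
  have hmd : m ∈ fOrbit d := not_not.mp (Nat.find_min hex (by omega))
  have hmd' : m ∉ fOrbit (d + 1) := by
    rw [Nat.sub_add_cancel (by omega)]
    exact Nat.find_spec hex
  obtain ⟨v, hv, hvm, hmv⟩ := exists_mem_fOrbit_le_lt_F (d + 1) (by omega : 1 ≤ m)
  have hvm : v < m := lt_of_le_of_ne hvm fun h => hmd' (h ▸ hv)
  obtain ⟨_ | n, hn⟩ := exists_iterate_F_eq (fOrbit_succ_subset d hv) hmd hvm.le
  · exact absurd hn hvm.ne
  rw [add_comm] at hn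
  refine ⟨d, v, n, hv, ?_, hn⟩
  rw [← hn, F_succ_apply] at hmv
  exact Nat.lt_of_add_lt_add_left ((strictMono_iterate_F d v).lt_iff_lt.mp hmv)

noncomputable def outerLayer (m : ℕ) : ℕ × ℕ × ℕ :=
  if hm : 2 ≤ m then
    Classical.choose (p := fun s : ℕ × ℕ × ℕ => IsOuterLayer m s.1 s.2.1 s.2.2)
      (by obtain ⟨d, v, n, h⟩ := exists_isOuterLayer hm; exact ⟨(d, v, n), h⟩)
  else 0

lemma isOuterLayer_outerLayer {m : ℕ} (hm : 2 ≤ m) :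
    IsOuterLayer m (outerLayer m).1 (outerLayer m).2.1 (outerLayer m).2.2 := by
  rw [outerLayer, dif_pos hm]
  exact Classical.choose_spec (p := fun s : ℕ × ℕ × ℕ => IsOuterLayer m s.1 s.2.1 s.2.2) _

lemma IsOuterLayer.outerLayer_eq {m d v n : ℕ} (h : IsOuterLayer m d v n) :
    outerLayer m = (d, v, n) := by
  obtain ⟨hd, hv, hn⟩ := (isOuterLayer_outerLayer h.two_le).unique h
  rw [← hd, ← hv, ← hn]

noncomputable def ackermannMap (f : ℕ → ℕ) (m : ℕ) : ℕ :=
  if hm : 2 ≤ m then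
    have hs := isOuterLayer_outerLayer hm
    have := hs.lt_self
    have := hs.lt.trans hs.lt_self
    (F (f (outerLayer m).1))^[1 + ackermannMap f (outerLayer m).2.2]
      (ackermannMap f (outerLayer m).2.1)
  else m
termination_by m

lemma ackermannMap_of_le_one (f : ℕ → ℕ) {m : ℕ} (hm : m ≤ 1) : ackermannMap f m = m := by
  rw [ackermannMap, dif_neg (by omega)]

namespace IsOuterLayer

variable {f : ℕ → ℕ} {m d v n : ℕ}

lemma ackermannMap_eq (h : IsOuterLayer m d v n) :
    ackermannMap f m = (F (f d))^[1 + ackermannMap f n] (ackermannMap f v) := by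
  rw [ackermannMap, dif_pos h.two_le]
  simp only [h.outerLayer_eq]

lemma ackermannMap_inner_lt (h : IsOuterLayer m d v n) :
    ackermannMap f v < ackermannMap f m :=
  h.ackermannMap_eq ▸ lt_iterate_F_one_add _ _ _

lemma ackermannMap_lt_F (h : IsOuterLayer m d v n) (hnv : ackermannMap f n < ackermannMap f v) :
    ackermannMap f m < F (f d + 1) (ackermannMap f v) :=
  h.ackermannMap_eq ▸ iterate_F_one_add_lt_F_succ hnv

end IsOuterLayer

section StrictMonoOn

variable {f : ℕ → ℕ} {b : ℕ}

lemma ackermannMap_mem_fOrbit (hf : StrictMonoOn f (Set.Iio b)) {m c : ℕ} (hm : m < F b 1)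
    (hmc : m ∈ fOrbit (c + 1)) :
    ackermannMap f m ∈ fOrbit (f c + 1) := by
  induction m using Nat.strong_induction_on generalizing c with
  | _ m ih =>
  rcases lt_or_ge m 2 with hm2 | hm2
  · obtain rfl : m = 1 := by have := one_le_of_mem_fOrbit hmc; omega
    rw [ackermannMap_of_le_one f le_rfl]
    exact one_mem_fOrbit _
  · obtain ⟨d, v, n, hs⟩ := exists_isOuterLayer hm2
    have hcd : c < d := hs.le_of_mem_fOrbit hmc
    have hdb : d < b := hs.lt_of_lt_F_one hm
    have hv := ih v hs.lt_self (hs.lt_self.trans hm) hs.mem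
    rw [hs.ackermannMap_eq]
    exact fOrbit_antitone (hf (hcd.trans hdb) hdb hcd)
      (iterate_F_mem_fOrbit (fOrbit_succ_subset _ hv) _)

lemma IsOuterLayer.ackermannMap_lt (hf : StrictMonoOn f (Set.Iio b)) {m d v n k : ℕ}
    (hm : m < F b 1) (hs : IsOuterLayer m d v n)
    (ih : StrictMonoOn (ackermannMap f) (Set.Iio m)) (hkm : k < m) :
    ackermannMap f k < ackermannMap f m := by
  induction k using Nat.strong_induction_on with
  | _ k ihk =>
  rcases le_or_gt k v with hkv | hvk
  · exact (ih.monotoneOn hkm hs.lt_self hkv).trans_lt hs.ackermannMap_inner_lt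
  · have hk2 : 2 ≤ k := by have := one_le_of_mem_fOrbit hs.mem; omega
    obtain ⟨d', v', n', hk⟩ := exists_isOuterLayer hk2
    -- `k` lies strictly between the consecutive points `v` and `F_{d+1}(v)` of `fOrbit (d + 1)`.
    have hd' : d' ≤ d := by
      by_contra! hdd'
      exact (F_le_of_mem_fOrbit hs.mem (fOrbit_antitone hdd' hk.mem_fOrbit) hvk).not_gt
        (hkm.trans hs.lt_F)
    have hv'm : v' < m := hk.lt_self.trans hkm
    rcases hd'.lt_or_eq with hd'd | rfl
    · calc ackermannMap f k < F (f d' + 1) (ackermannMap f v') :=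
            hk.ackermannMap_lt_F (ih (hk.lt.trans hv'm) hv'm hk.lt)
        _ ≤ ackermannMap f m :=
            F_le_of_mem_fOrbit (ackermannMap_mem_fOrbit hf (hv'm.trans hm) hk.mem)
              (ackermannMap_mem_fOrbit hf hm (fOrbit_antitone hd'd hs.mem_fOrbit))
              (ihk v' hk.lt_self hv'm)
    · obtain rfl : v' = v := eq_of_mem_fOrbit_of_le_of_lt_F hk.mem hs.mem hk.lt_self.le hk.lt_F
        hvk.le (hkm.trans hs.lt_F)
      have hn : n' < n := by
        have := (strictMono_iterate_F d' v').lt_iff_lt.mp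
          (hk.eq.trans_lt (hkm.trans_eq hs.eq.symm))
        omega
      have hnm : n < m := hs.lt.trans hs.lt_self
      rw [hk.ackermannMap_eq, hs.ackermannMap_eq]
      exact strictMono_iterate_F _ _ (by have := ih (hn.trans hnm) hnm hn; omega)

lemma ackermannMap_strictMonoOn (hf : StrictMonoOn f (Set.Iio b)) :
    StrictMonoOn (ackermannMap f) (Set.Iio (F b 1)) := by
  suffices ∀ m < F b 1, ∀ k < m, ackermannMap f k < ackermannMap f m from
    fun k _ m hm hkm => this m hm k hkm
  intro m
  induction m using Nat.strong_induction_on with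
  | _ m ih =>
  intro hm k hkm
  rcases lt_or_ge m 2 with hm2 | hm2
  · obtain ⟨rfl, rfl⟩ : k = 0 ∧ m = 1 := by omega
    simp only [ackermannMap_of_le_one f zero_le_one, ackermannMap_of_le_one f le_rfl, zero_lt_one]
  · obtain ⟨d, v, n, hs⟩ := exists_isOuterLayer hm2
    exact hs.ackermannMap_lt hf hm (fun i hi j hj hij => ih j hj (hj.trans hm) i hij) hkm

lemma ackermannMap_lt_F_one (hf : StrictMonoOn f (Set.Iio b)) {b' : ℕ} (hfb : ∀ n < b, f n < b')
    {m : ℕ} (hm : m < F b 1) :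
    ackermannMap f m < F b' 1 := by
  induction m using Nat.strong_induction_on with
  | _ m ih =>
  rcases lt_or_ge m 2 with hm2 | hm2
  · rw [ackermannMap_of_le_one f (by omega)]
    have := add_two_le_F_one b'
    omega
  · obtain ⟨d, v, n, hs⟩ := exists_isOuterLayer hm2
    have hvm : v < F b 1 := hs.lt_self.trans hm
    calc ackermannMap f m < F (f d + 1) (ackermannMap f v) :=
          hs.ackermannMap_lt_F (ackermannMap_strictMonoOn hf (hs.lt.trans hvm) hvm hs.lt)
      _ ≤ F b' 1 :=
          F_le_of_mem_fOrbit (ackermannMap_mem_fOrbit hf hvm hs.mem)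
            (F_one_mem_fOrbit (hfb d (hs.lt_of_lt_F_one hm))) (ih v hs.lt_self hvm)

end StrictMonoOn

lemma evalANF_concat (l : List (ℕ × ℕ)) (q : ℕ × ℕ) :
    evalANF (l ++ [q]) = (F q.1)^[1 + q.2] (evalANF l) := by
  simp only [evalANF, List.foldl_append, List.foldl_cons, List.foldl_nil]

lemma isANF_concat_iff {l : List (ℕ × ℕ)} {q : ℕ × ℕ} :
    IsANF (l ++ [q]) ↔ IsANF l ∧ (∀ p ∈ l.getLast?, q.1 < p.1) ∧ q.2 < evalANF l := by
  have hexp : (∀ i (h : i < (l ++ [q]).length),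
      ((l ++ [q]).get ⟨i, h⟩).2 < evalANF ((l ++ [q]).take i)) ↔
      (∀ i (h : i < l.length), (l.get ⟨i, h⟩).2 < evalANF (l.take i)) ∧
        q.2 < evalANF l := by
    simp only [List.length_append, List.length_singleton, List.get_eq_getElem]
    constructor
    · intro H
      refine ⟨fun i hi => ?_, ?_⟩
      · simpa [List.getElem_append_left hi, List.take_append_of_le_length hi.le]
          using H i (by omega)
      · simpa using H l.length (by omega)
    · rintro ⟨H, hq⟩ i hi
      rcases (Nat.lt_succ_iff.mp hi).lt_or_eq with hi | rfl
      · simpa [List.getElem_append_left hi, List.take_append_of_le_length hi.le] using H i hi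
      · simpa using hq
  rw [IsANF, IsANF, hexp, List.Chain', List.Chain', List.isChain_append]
  simp only [List.isChain_singleton, List.head?_cons, Option.mem_def, Option.some.injEq,
    forall_eq', true_and]
  tauto

lemma evalANF_mem_fOrbit {l : List (ℕ × ℕ)} (hl : l.IsChain fun p q => q.1 < p.1) {c : ℕ}
    (hc : ∀ p ∈ l.getLast?, c ≤ p.1) : evalANF l ∈ fOrbit c := by
  induction l using List.reverseRecOn generalizing c with
  | nil => exact one_mem_fOrbit c
  | append_singleton l q ih =>
    obtain ⟨hl, -, hq⟩ := List.isChain_append.mp hl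
    rw [evalANF_concat]
    exact fOrbit_antitone (hc q (by simp)) (iterate_F_mem_fOrbit
      (fOrbit_succ_subset _ (ih hl fun p hp => hq p hp q rfl)) _)

namespace IsANF

variable {l : List (ℕ × ℕ)} {q : ℕ × ℕ}

lemma isOuterLayer_concat (h : IsANF (l ++ [q])) :
    IsOuterLayer (evalANF (l ++ [q])) q.1 (evalANF l) q.2 := by
  obtain ⟨hl, hq, hlt⟩ := isANF_concat_iff.mp h
  exact ⟨evalANF_mem_fOrbit hl.1 hq, hlt, (evalANF_concat l q).symm⟩

lemma fst_lt {b : ℕ} (hl : IsANF l) (h : evalANF l < F b 1) : ∀ p ∈ l, p.1 < b := by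
  induction l using List.reverseRecOn with
  | nil => simp
  | append_singleton l q ih =>
    have hs := hl.isOuterLayer_concat
    intro p hp
    rcases List.mem_append.mp hp with hp | hp
    · exact ih (isANF_concat_iff.mp hl).1 (hs.lt_self.trans h) p hp
    · rw [List.mem_singleton.mp hp]
      exact hs.lt_of_lt_F_one h

lemma ackermannMap_evalANF (f : ℕ → ℕ) (hl : IsANF l) :
    ackermannMap f (evalANF l) = evalANF (l.map fun p => (f p.1, ackermannMap f p.2)) := by
  induction l using List.reverseRecOn with
  | nil => exact ackermannMap_of_le_one f le_rfl
  | append_singleton l q ih =>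
    rw [hl.isOuterLayer_concat.ackermannMap_eq, List.map_append, List.map_singleton,
      evalANF_concat, ih (isANF_concat_iff.mp hl).1]

lemma map_ackermannMap {f : ℕ → ℕ} {b : ℕ} (hf : StrictMonoOn f (Set.Iio b)) (hl : IsANF l)
    (h : evalANF l < F b 1) : IsANF (l.map fun p => (f p.1, ackermannMap f p.2)) := by
  induction l using List.reverseRecOn with
  | nil => exact ⟨List.isChain_nil, by simp⟩
  | append_singleton l q ih =>
    have hs := hl.isOuterLayer_concat
    obtain ⟨hl', hq, -⟩ := isANF_concat_iff.mp hl
    have hlb := hl.fst_lt h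
    have hv : evalANF l < F b 1 := hs.lt_self.trans h
    rw [List.map_append, List.map_singleton, isANF_concat_iff]
    refine ⟨ih hl' hv, ?_, ?_⟩
    · simp only [List.getLast?_map, Option.mem_map, forall_exists_index, and_imp]
      rintro _ p hp rfl
      exact hf (hlb q (by simp)) (hlb p (List.mem_append_left _ (List.mem_of_getLast? hp)))
        (hq p hp)
    · rw [← hl'.ackermannMap_evalANF]
      exact ackermannMap_strictMonoOn hf (hs.lt.trans hv) hv hs.lt

end IsANF

/-- For strictly increasing `f : {0,…,b−1} → {0,…,b'−1}`, there is a map `A f` on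
`{0,…,F_b(1)−1}` with `A f 0 = 0` that acts on Ackermann normal forms by applying `f` to
the indices and itself recursively to the exponents; it preserves Ackermann normal forms,
takes values below `F_{b'}(1)`, and is strictly increasing below `F_b(1)`. -/
theorem ackermannDilator_morphism (b b' : ℕ) (f : ℕ → ℕ)
    (hmono : ∀ m n, m < n → n < b → f m < f n)
    (hbound : ∀ n, n < b → f n < b') :
    ∃ A : ℕ → ℕ, A 0 = 0 ∧
      (∀ l : List (ℕ × ℕ), IsANF l → evalANF l < F b 1 →
        A (evalANF l) = evalANF (l.map fun p => (f p.1, A p.2)) ∧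
          IsANF (l.map fun p => (f p.1, A p.2))) ∧
      (∀ m, m < F b 1 → A m < F b' 1) ∧
      (∀ m n, m < n → n < F b 1 → A m < A n) := by
  have hf : StrictMonoOn f (Set.Iio b) := fun m _ n hn hmn => hmono m n hmn hn
  refine ⟨ackermannMap f, ackermannMap_of_le_one f zero_le_one,
    fun l hl hlt => ⟨hl.ackermannMap_evalANF f, hl.map_ackermannMap hf hlt⟩,
    fun m hm => ackermannMap_lt_F_one hf hbound hm,
    fun m n hmn hn => ackermannMap_strictMonoOn hf (hmn.trans hn) hn hmn⟩
end
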